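/- For every integer k ≥ 1, the Riemann zeta function satisfies ζ(k+1) = Σ_{n=k}^{∞} ((-1)^{n-k}/(n · n!)) s(n,k), where s(n,k) are the (signed) classical Stirling numbers of the first kind; equivalently, ζ(k+1) = Σ_{n=k}^{∞} |s(n,k)|/(n · n!), and this series converges. -/

import Mathlib

/-!
Write `c(n, k) = |s(n, k)|` and `B(n, q) = n! q! / (n + q + 1)!`, the Beta integral
`∫₀¹ xⁿ (1 - x)^q dx`. Two telescoping series give `∑_q B(n, q) = 1 / n` for `n ≥ 1` and
`∑_{n ≥ j} B(n + 1, q) / (n + 1) = B(j, q) / (q + 1)`. Combined with the unrolled recurrence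
`c(n + 1, k + 1) / n! = ∑_{j ≤ n} c(j, k) / j!`, the second one shows by induction on `k` that
`∑_n c(n, k) / n! · B(n, q) = 1 / (q + 1)^(k + 1)`. Summing over `q` and exchanging the order of
summation of this nonnegative double series turns `ζ(k + 1) = ∑_q 1 / (q + 1)^(k + 1)` into
`∑_n c(n, k) / (n · n!)`.
-/

open Finset Filter Topology Nat

def stirling1 : ℕ → ℕ → ℤ
  | 0, 0 => 1
  | 0, _ + 1 => 0
  | _ + 1, 0 => 0
  | n + 1, k + 1 => stirling1 n k - (n : ℤ) * stirling1 n (k + 1)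

theorem stirling1_eq_neg_one_pow_mul_stirlingFirst :
    ∀ n k, stirling1 n k = (-1) ^ (n + k) * (stirlingFirst n k : ℤ)
  | 0, 0 | 0, _ + 1 | _ + 1, 0 => by simp [stirling1]
  | n + 1, k + 1 => by
    rw [stirling1, stirling1_eq_neg_one_pow_mul_stirlingFirst n k,
      stirling1_eq_neg_one_pow_mul_stirlingFirst n (k + 1), stirlingFirst_succ_succ]
    push_cast
    ring

theorem natAbs_stirling1 (n k : ℕ) : (stirling1 n k).natAbs = stirlingFirst n k := by
  simp [stirling1_eq_neg_one_pow_mul_stirlingFirst, Int.natAbs_mul, Int.natAbs_pow]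

theorem neg_one_pow_mul_stirling1_add {R : Type*} [Ring R] (m k : ℕ) :
    (-1 : R) ^ m * stirling1 (m + k) k = stirlingFirst (m + k) k := by
  rw [stirling1_eq_neg_one_pow_mul_stirlingFirst]
  push_cast
  rw [← mul_assoc, ← pow_add, show m + (m + k + k) = 2 * (m + k) by ring, pow_mul]
  simp

theorem stirlingFirst_succ_succ_div_factorial (n k : ℕ) :
    (stirlingFirst (n + 1) (k + 1) : ℝ) / n ! =
      ∑ j ∈ range (n + 1), (stirlingFirst j k : ℝ) / j ! := by
  induction n with
  | zero => simp [stirlingFirst_succ_succ]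
  | succ n ih =>
    rw [sum_range_succ, ← ih, stirlingFirst_succ_succ, factorial_succ]
    push_cast
    field_simp

theorem hasSum_telescope_of_nonneg {f t : ℕ → ℝ} (hf : ∀ p, 0 ≤ f p)
    (hft : ∀ p, f p = t p - t (p + 1)) (ht : Tendsto t atTop (𝓝 0)) : HasSum f (t 0) := by
  rw [hasSum_iff_tendsto_nat_of_nonneg hf]
  simp only [hft, sum_range_sub']
  simpa using tendsto_const_nhds.sub ht

theorem hasSum_prod_of_nonneg {α β : Type*} {F : α × β → ℝ} {g : α → ℝ} {S : ℝ} (hF : 0 ≤ F)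
    (hg : ∀ a, HasSum (fun b => F (a, b)) (g a)) (hS : HasSum g S) : HasSum F S := by
  have hF' : Summable F := (summable_prod_of_nonneg hF).2
    ⟨fun a => (hg a).summable, hS.summable.congr fun a => ((hg a).tsum_eq).symm⟩
  exact (hF'.hasSum.prod_fiberwise hg).unique hS ▸ hF'.hasSum

theorem HasSum.sum_antidiagonal {A M : Type*} [AddCommMonoid A] [HasAntidiagonal A]
    [AddCommMonoid M] [TopologicalSpace M] [ContinuousAdd M] [RegularSpace M]
    {F : A × A → M} {S : M} (h : HasSum F S) :
    HasSum (fun n => ∑ x ∈ antidiagonal n, F x) S :=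
  (HasAntidiagonal.sigmaAntidiagonalEquivProd.hasSum_iff.2 h).sigma fun n =>
    (antidiagonal n).hasSum F

theorem hasSum_factorial_div_factorial_add (a d : ℕ) :
    HasSum (fun p => ((a + p)! : ℝ) / (a + p + d + 2)!) (a ! / ((d + 1) * (a + d + 1)!)) := by
  let t : ℕ → ℝ := fun p => (a + p)! / ((d + 1) * (a + p + d + 1)!)
  have ht_le : ∀ p, t p ≤ 1 / (p + 1) := fun p => by
    have : (p + 1) * (a + p)! ≤ (d + 1) * (a + p + d + 1)! :=
      calc (p + 1) * (a + p)! ≤ (a + p + 1) * (a + p)! := by gcongr; omega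
        _ = (a + p + 1)! := (factorial_succ _).symm
        _ ≤ (a + p + d + 1)! := factorial_le (by omega)
        _ ≤ (d + 1) * (a + p + d + 1)! := Nat.le_mul_of_pos_left _ (by omega)
    rw [div_le_div_iff₀ (by positivity) (by positivity)]
    exact_mod_cast (by linarith : (a + p)! * (p + 1) ≤ 1 * ((d + 1) * (a + p + d + 1)!))
  refine hasSum_telescope_of_nonneg (fun p => by positivity) (fun p => ?_)
    (squeeze_zero (fun p => by positivity) ht_le tendsto_one_div_add_atTop_nhds_zero_nat)
  simp only [t, ← add_assoc, factorial_succ (a + p),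
    show a + p + 1 + d + 1 = a + p + d + 1 + 1 by ring,
    show a + p + d + 2 = a + p + d + 1 + 1 by ring, factorial_succ (a + p + d + 1)]
  push_cast
  field_simp
  ring

noncomputable def betaNat (n q : ℕ) : ℝ := n ! * q ! / (n + q + 1)!

theorem betaNat_nonneg (n q : ℕ) : 0 ≤ betaNat n q := by
  unfold betaNat
  positivity

theorem hasSum_betaNat_succ_left (n : ℕ) : HasSum (betaNat (n + 1)) (1 / (n + 1)) := by
  have h := (hasSum_factorial_div_factorial_add 0 n).mul_left ((n + 1)! : ℝ)
  simp only [zero_add, factorial_zero, cast_one] at h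
  rw [show (1 / (n + 1) : ℝ) = (n + 1)! * (1 / ((n + 1) * (n + 1)!)) by field_simp]
  refine h.congr_fun fun q => ?_
  rw [betaNat, show n + 1 + q + 1 = q + n + 2 by ring]
  ring

theorem hasSum_betaNat_div (j q : ℕ) :
    HasSum (fun p => betaNat (j + p + 1) q / (j + p + 1)) (betaNat j q / (q + 1)) := by
  have h := (hasSum_factorial_div_factorial_add j q).mul_left (q ! : ℝ)
  rw [show betaNat j q / (q + 1) = q ! * (j ! / ((q + 1) * (j + q + 1)!)) by
    rw [betaNat]; field_simp]
  refine h.congr_fun fun p => ?_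
  rw [betaNat, factorial_succ (j + p), show j + p + 1 + q + 1 = j + p + q + 2 by ring]
  push_cast
  field_simp

theorem hasSum_stirlingFirst_mul_betaNat (k q : ℕ) :
    HasSum (fun n => (stirlingFirst n k : ℝ) / n ! * betaNat n q)
      (1 / ((q : ℝ) + 1) ^ (k + 1)) := by
  induction k with
  | zero =>
    convert hasSum_single 0 fun n hn => ?_
    · simp [betaNat, factorial_succ]
      field_simp
    · obtain ⟨m, rfl⟩ := exists_eq_succ_of_ne_zero hn
      simp
  | succ k ih =>
    let F : ℕ × ℕ → ℝ := fun x =>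
      stirlingFirst x.1 k / x.1 ! * (betaNat (x.1 + x.2 + 1) q / (x.1 + x.2 + 1))
    have hrow (j : ℕ) :
        HasSum (fun p => F (j, p)) (stirlingFirst j k / j ! * betaNat j q / (q + 1)) :=
      mul_div_assoc _ _ (q + 1 : ℝ) ▸ (hasSum_betaNat_div j q).mul_left _
    have hF : HasSum F (1 / ((q : ℝ) + 1) ^ (k + 2)) := by
      refine hasSum_prod_of_nonneg (fun x => ?_) hrow ?_
      · have := betaNat_nonneg (x.1 + x.2 + 1) q
        positivity
      · rw [pow_succ, ← div_div]
        exact ih.div_const _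
    rw [← hasSum_nat_add_iff' 1]
    simp only [sum_range_one, stirlingFirst_zero_succ, cast_zero, zero_div, zero_mul, sub_zero]
    refine hF.sum_antidiagonal.congr_fun fun n => ?_
    calc (stirlingFirst (n + 1) (k + 1) : ℝ) / (n + 1)! * betaNat (n + 1) q
        = (∑ j ∈ range (n + 1), (stirlingFirst j k : ℝ) / j !) *
            (betaNat (n + 1) q / (n + 1)) := by
          rw [← stirlingFirst_succ_succ_div_factorial, factorial_succ]
          push_cast
          field_simp
      _ = ∑ x ∈ antidiagonal n, F x := by
          rw [sum_mul, ← Nat.sum_antidiagonal_eq_sum_range_succ_mk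
            (fun x => (stirlingFirst x.1 k : ℝ) / x.1 ! * (betaNat (n + 1) q / (n + 1)))]
          refine sum_congr rfl fun x hx => ?_
          simp only [F, ← mem_antidiagonal.1 hx]
          push_cast
          rfl

theorem summable_one_div_nat_add_one_pow {p : ℕ} (hp : 1 < p) :
    Summable fun q : ℕ => 1 / ((q : ℝ) + 1) ^ p := by
  exact_mod_cast (summable_nat_add_iff 1).2 (Real.summable_one_div_nat_pow.2 hp)

theorem hasSum_stirlingFirst_div_mul_factorial {k : ℕ} (hk : k ≠ 0) :
    HasSum (fun n => (stirlingFirst n k : ℝ) / (n * n !))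
      (∑' q : ℕ, 1 / ((q : ℝ) + 1) ^ (k + 1)) := by
  have hF := hasSum_prod_of_nonneg
    (F := fun x => (stirlingFirst x.2 k : ℝ) / x.2 ! * betaNat x.2 x.1)
    (fun x => by have := betaNat_nonneg x.2 x.1; positivity)
    (hasSum_stirlingFirst_mul_betaNat k) (summable_one_div_nat_add_one_pow (by omega)).hasSum
  refine ((Equiv.prodComm ℕ ℕ).hasSum_iff.2 hF).prod_fiberwise fun n => ?_
  cases n with
  | zero => simp [stirlingFirst_eq_zero_of_lt (pos_of_ne_zero hk)]
  | succ n =>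
    rw [show (stirlingFirst (n + 1) k : ℝ) / ((n + 1 : ℕ) * (n + 1)!)
      = stirlingFirst (n + 1) k / (n + 1)! * (1 / (n + 1)) by push_cast; field_simp]
    exact (hasSum_betaNat_succ_left n).mul_left _

theorem riemannZeta_nat_add_one {k : ℕ} (hk : k ≠ 0) :
    riemannZeta (k + 1) = ((∑' q : ℕ, 1 / ((q : ℝ) + 1) ^ (k + 1) : ℝ) : ℂ) := by
  rw [show (k : ℂ) + 1 = (k + 1 : ℕ) by push_cast; rfl,
    zeta_eq_tsum_one_div_nat_add_one_cpow (by simp; omega), Complex.ofReal_tsum]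
  refine tsum_congr fun q => ?_
  rw [Complex.cpow_natCast]
  push_cast
  rfl

/-- Rassias–Srivastava: `ζ(k+1) = ∑_{n=k}^∞ ((-1)^{n-k}/(n·n!)) s(n,k)`,
equivalently `ζ(k+1) = ∑_{n=k}^∞ |s(n,k)|/(n·n!)`, and the series converges.
The sum over `n ≥ k` is reindexed by `n = m + k`. -/
theorem zeta_eq_tsum_stirling1 (k : ℕ) (hk : 1 ≤ k) :
    Summable (fun m : ℕ =>
      ((-1 : ℝ) ^ m * (stirling1 (m + k) k : ℝ)) / ((m + k) * (m + k).factorial)) ∧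
    riemannZeta (k + 1) =
      ∑' m : ℕ, ((-1 : ℂ) ^ m * (stirling1 (m + k) k : ℂ)) / ((m + k) * (m + k).factorial) ∧
    riemannZeta (k + 1) =
      ∑' m : ℕ, (((stirling1 (m + k) k).natAbs : ℂ)) / ((m + k) * (m + k).factorial) := by
  have hk : k ≠ 0 := by omega
  have hR : HasSum (fun m => (stirlingFirst (m + k) k : ℝ) / ((m + k) * (m + k)!))
      (∑' q : ℕ, 1 / ((q : ℝ) + 1) ^ (k + 1)) := by
    have h := (hasSum_nat_add_iff' k).2 (hasSum_stirlingFirst_div_mul_factorial hk)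
    rw [sum_eq_zero fun i hi => by simp [stirlingFirst_eq_zero_of_lt (mem_range.1 hi)],
      sub_zero] at h
    exact_mod_cast h
  have hC : HasSum (fun m => (stirlingFirst (m + k) k : ℂ) / ((m + k) * (m + k)!))
      (riemannZeta (k + 1)) := by
    rw [riemannZeta_nat_add_one hk]
    exact (Complex.hasSum_ofReal.2 hR).congr_fun fun m => by push_cast; rfl
  refine ⟨(hR.congr_fun fun m => ?_).summable, (hC.congr_fun fun m => ?_).tsum_eq.symm,
    (hC.congr_fun fun m => ?_).tsum_eq.symm⟩
  · rw [neg_one_pow_mul_stirling1_add]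
  · rw [neg_one_pow_mul_stirling1_add]
  · rw [natAbs_stirling1]
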